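/- arXiv:1012.0869 — 6 statements merged into one kernel-verified Lean document; each statement's English description precedes it below -/
import Mathlib

section
/- Let φ, φ' : k⟨t₁,…,t_m⟩ → M_n(k) be k-algebra homomorphisms with φ surjective. If for every element p of the free algebra the characteristic polynomials of φ(p) and φ'(p) coincide, then there exists an invertible matrix g ∈ GL_n(k) such that φ'(p) = g·φ(p)·g⁻¹ for all p ∈ k⟨t₁,…,t_m⟩. -/
/-!
The kernel `I` of `φ` is a two-sided ideal, and `φ'(I)` consists of nilpotent matrices because
their characteristic polynomial is that of `0`. A minimal nonzero `φ'`-stable subspace `S` would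
satisfy `S = φ'(I) s` for every `s ∈ S` not killed by `φ'(I)`, giving `s = φ'(a) s` with `φ'(a)`
nilpotent; hence the common kernel `W` of `φ'(I)` is nonzero. It is `φ'`-stable, and on it `φ'`
factors through the surjection `φ` onto `Mₙ(k)`, so `W` is a nonzero `Mₙ(k)`-module. Every such
module contains a copy of the standard module `kⁿ`, which yields an injective, hence invertible,
`f : kⁿ → kⁿ` with `f ∘ φ(a) = φ'(a) ∘ f`.
-/

open Matrix Polynomial

section

variable {R A V : Type*} [CommSemiring R] [Semiring A] [Algebra R A] [AddCommMonoid V]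
  [Module R V]

def AlgHom.restrictEnd (ρ : A →ₐ[R] Module.End R V) (W : Submodule R V)
    (hW : ∀ a, ∀ v ∈ W, ρ a v ∈ W) : A →ₐ[R] Module.End R W where
  toFun a := (ρ a).restrict (hW a)
  map_one' := by ext; simp
  map_mul' a b := by ext; simp
  map_zero' := by ext; simp
  map_add' a b := by ext; simp
  commutes' c := by ext; simp

@[simp]
theorem AlgHom.restrictEnd_apply_coe (ρ : A →ₐ[R] Module.End R V) (W : Submodule R V)
    (hW : ∀ a, ∀ v ∈ W, ρ a v ∈ W) (a : A) (v : W) :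
    (ρ.restrictEnd W hW a v : V) = ρ a v :=
  rfl

theorem apply_mem_iInf_ker (ρ : A →ₐ[R] Module.End R V) (I : Ideal A) [I.IsTwoSided] (b : A)
    {v : V} (hv : v ∈ ⨅ a : I, LinearMap.ker (ρ a)) : ρ b v ∈ ⨅ a : I, LinearMap.ker (ρ a) := by
  simp only [Submodule.mem_iInf, LinearMap.mem_ker, Subtype.forall] at hv ⊢
  intro a ha
  rw [← Module.End.mul_apply, ← map_mul, hv _ (I.mul_mem_right b ha)]

end

theorem AlgHom.exists_comp_eq_of_surjective {R A B C : Type*} [CommSemiring R] [Ring A] [Ring B]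
    [Semiring C] [Algebra R A] [Algebra R B] [Algebra R C] (φ : A →ₐ[R] B)
    (hφ : Function.Surjective φ) (ρ : A →ₐ[R] C) (h : ∀ a, φ a = 0 → ρ a = 0) : ∃ ψ : B →ₐ[R] C, ∀ a, ψ (φ a) = ρ a :=
  ⟨(Ideal.Quotient.liftₐ (RingHom.ker φ) ρ h).comp (Ideal.quotientKerAlgEquivOfSurjective hφ).symm,
    fun a => by
      simp only [AlgHom.comp_apply, AlgEquiv.coe_toAlgHom,
        Ideal.quotientKerAlgEquivOfSurjective_symm_apply]
      exact Ideal.Quotient.lift_mk _ _ _⟩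

section

variable {k A V : Type*} [Field k] [Ring A] [Algebra k A] [AddCommGroup V] [Module k V]

theorem iInf_ker_ne_bot_of_isNilpotent [FiniteDimensional k V] [Nontrivial V]
    (ρ : A →ₐ[k] Module.End k V) (I : Ideal A) (hI : ∀ a ∈ I, IsNilpotent (ρ a)) :
    ⨅ a : I, LinearMap.ker (ρ a) ≠ ⊥ := by
  obtain ⟨S, ⟨hS_ne, hS_inv⟩, hS_min⟩ := wellFounded_lt.has_min
    {S : Submodule k V | S ≠ ⊥ ∧ ∀ a, ∀ v ∈ S, ρ a v ∈ S} ⟨⊤, top_ne_bot, fun _ _ _ => trivial⟩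
  obtain ⟨s, hsS, hs0⟩ := S.ne_bot_iff.mp hS_ne
  intro hker
  have hs_notMem : s ∉ ⨅ a : I, LinearMap.ker (ρ a) := by rwa [hker, Submodule.mem_bot]
  simp only [Submodule.mem_iInf, LinearMap.mem_ker, not_forall] at hs_notMem
  obtain ⟨⟨a₀, ha₀⟩, ha₀s⟩ := hs_notMem
  set U := (I.restrictScalars k).map (ρ.toLinearMap.flip s)
  have hU_le : U ≤ S := by
    rintro _ ⟨a, -, rfl⟩
    exact hS_inv a s hsS
  have hU_inv : ∀ b, ∀ v ∈ U, ρ b v ∈ U := by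
    rintro b _ ⟨a, ha, rfl⟩
    exact ⟨b * a, I.mul_mem_left b ha, by simp⟩
  have hU_ne : U ≠ ⊥ := U.ne_bot_iff.mpr ⟨ρ a₀ s, ⟨a₀, ha₀, rfl⟩, ha₀s⟩
  have hUS : U = S := by
    by_contra h
    exact hS_min U ⟨hU_ne, hU_inv⟩ (lt_of_le_of_ne hU_le h)
  obtain ⟨a, ha, has⟩ : s ∈ U := hUS ▸ hsS
  replace has : ρ a s = s := has
  obtain ⟨N, hN⟩ := hI a ha
  have hpow : ∀ j, (ρ a ^ j) s = s := by
    intro j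
    induction j with
    | zero => rfl
    | succ j ih => rw [pow_succ, Module.End.mul_apply, has, ih]
  exact hs0 (by rw [← hpow N, hN, LinearMap.zero_apply])

variable {ι : Type*} [Fintype ι] [DecidableEq ι]

theorem Matrix.exists_injective_intertwiner [Nontrivial V]
    (ψ : Matrix ι ι k →ₐ[k] Module.End k V) :
    ∃ f : (ι → k) →ₗ[k] V, Function.Injective f ∧ ∀ x c, f (x *ᵥ c) = ψ x (f c) := by
  obtain ⟨w, hw⟩ := exists_ne (0 : V)
  obtain ⟨i, hi⟩ : ∃ i, ψ (single i i 1) w ≠ 0 := by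
    by_contra! h
    have hsum : ∑ i, ψ (single i i 1) w = w := by
      rw [← LinearMap.sum_apply, ← map_sum, sum_single_one, map_one, Module.End.one_apply]
    exact hw (by simpa [h] using hsum.symm)
  let f : (ι → k) →ₗ[k] V :=
    { toFun c := ψ (vecMulVec c (Pi.single i 1)) w
      map_add' c d := by simp [add_vecMulVec]
      map_smul' r c := by simp [smul_vecMulVec] }
  have hf : ∀ x c, f (x *ᵥ c) = ψ x (f c) := fun x c => by
    simp [f, ← mul_vecMulVec]
  have hfi : f (Pi.single i 1) = ψ (single i i 1) w := by
    simp [f, ← single_eq_single_vecMulVec_single]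
  refine ⟨f, (injective_iff_map_eq_zero f).mpr fun c hc => funext fun j => ?_, hf⟩
  have : c j • ψ (single i i 1) w = 0 := by
    rw [← hfi, ← map_smul, ← one_mul (c j), ← single_mulVec_eq i j, hf, hc, map_zero]
  exact (smul_eq_zero.mp this).resolve_right hi

theorem Matrix.isNilpotent_of_charpoly_eq_X_pow {M : Matrix ι ι k}
    (h : M.charpoly = X ^ Fintype.card ι) : IsNilpotent M :=
  ⟨_, by simpa [h] using M.aeval_self_charpoly⟩

theorem Matrix.exists_GL_mulVec_eq_of_injective (f : (ι → k) →ₗ[k] (ι → k))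
    (hf : Function.Injective f) : ∃ g : GL ι k, ∀ c, (g : Matrix ι ι k) *ᵥ c = f c := by
  have hunit : IsUnit (LinearMap.toMatrix' f) :=
    ((LinearMap.isUnit_iff_ker_eq_bot f).mpr (LinearMap.ker_eq_bot.mpr hf)).map
      LinearMap.toMatrixAlgEquiv'
  exact ⟨hunit.unit, fun c => by simp [LinearMap.toMatrix'_mulVec]⟩

theorem exists_injective_intertwiner_of_charpoly_eq (φ φ' : A →ₐ[k] Matrix ι ι k)
    (hφ : Function.Surjective φ) (hchar : ∀ a, (φ a).charpoly = (φ' a).charpoly) :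
    ∃ f : (ι → k) →ₗ[k] (ι → k), Function.Injective f ∧ ∀ a c, f (φ a *ᵥ c) = φ' a *ᵥ f c := by
  cases isEmpty_or_nonempty ι
  · exact ⟨0, Function.injective_of_subsingleton _, fun _ _ => Subsingleton.elim _ _⟩
  let ρ : A →ₐ[k] Module.End k (ι → k) := Matrix.toLinAlgEquiv'.toAlgHom.comp φ'
  let W := ⨅ a : RingHom.ker φ, LinearMap.ker (ρ a)
  have hnil : ∀ a ∈ RingHom.ker φ, IsNilpotent (ρ a) := by
    intro a ha
    have : (φ' a).charpoly = X ^ Fintype.card ι := by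
      rw [← hchar, RingHom.mem_ker.mp ha, charpoly_zero]
    exact (isNilpotent_of_charpoly_eq_X_pow this).map Matrix.toLinAlgEquiv'
  have : Nontrivial W :=
    Submodule.nontrivial_iff_ne_bot.mpr (iInf_ker_ne_bot_of_isNilpotent ρ _ hnil)
  obtain ⟨ψ, hψ⟩ := AlgHom.exists_comp_eq_of_surjective φ hφ
    (ρ.restrictEnd W fun b _ => apply_mem_iInf_ker ρ _ b) fun a ha =>
      LinearMap.ext fun v => Subtype.ext (Submodule.mem_iInf _ |>.mp v.2 ⟨a, ha⟩)
  obtain ⟨f, hf_inj, hf⟩ := exists_injective_intertwiner ψ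
  refine ⟨W.subtype ∘ₗ f, W.injective_subtype.comp hf_inj, fun a c => ?_⟩
  simp [hf, hψ, ρ]

theorem exists_GL_conj_of_charpoly_eq (φ φ' : A →ₐ[k] Matrix ι ι k)
    (hφ : Function.Surjective φ) (hchar : ∀ a, (φ a).charpoly = (φ' a).charpoly) :
    ∃ g : GL ι k, ∀ a, φ' a = g * φ a * (↑g⁻¹ : Matrix ι ι k) := by
  obtain ⟨f, hf_inj, hf⟩ := exists_injective_intertwiner_of_charpoly_eq φ φ' hφ hchar
  obtain ⟨g, hg⟩ := exists_GL_mulVec_eq_of_injective f hf_inj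
  refine ⟨g, fun a => ?_⟩
  rw [Units.eq_mul_inv_iff_mul_eq, ext_iff_mulVec]
  intro c
  simp only [← mulVec_mulVec, hg, hf]

end

theorem stmt_0_general (k : Type*) [Field k] (m n : ℕ)
    (φ φ' : FreeAlgebra k (Fin m) →ₐ[k] Matrix (Fin n) (Fin n) k)
    (hφ : Function.Surjective φ)
    (hchar : ∀ p : FreeAlgebra k (Fin m), (φ p).charpoly = (φ' p).charpoly) :
    ∃ g : GL (Fin n) k, ∀ p : FreeAlgebra k (Fin m),
      φ' p = (g : Matrix (Fin n) (Fin n) k) * φ p * (↑g⁻¹ : Matrix (Fin n) (Fin n) k) :=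
  exists_GL_conj_of_charpoly_eq φ φ' hφ hchar

/-- If `φ, φ' : k⟨t₁,…,t_m⟩ → M_n(k)` are `k`-algebra homomorphisms with `φ`
surjective, and `φ(p)` and `φ'(p)` have the same characteristic polynomial for every `p`,
then `φ'` is conjugate to `φ` by some `g ∈ GL_n(k)`. -/
theorem stmt_0 (k : Type*) [Field k] [IsAlgClosed k] (m n : ℕ) [NeZero m] [NeZero n]
    (φ φ' : FreeAlgebra k (Fin m) →ₐ[k] Matrix (Fin n) (Fin n) k)
    (hφ : Function.Surjective φ)
    (hchar : ∀ p : FreeAlgebra k (Fin m), (φ p).charpoly = (φ' p).charpoly) :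
    ∃ g : GL (Fin n) k, ∀ p : FreeAlgebra k (Fin m),
      φ' p = (g : Matrix (Fin n) (Fin n) k) * φ p * (↑g⁻¹ : Matrix (Fin n) (Fin n) k) :=
  stmt_0_general k m n φ φ' hφ hchar
end

section
/- Let x = (x₁,…,x_m) be a generating m-tuple in M_n(k). Then for every m-tuple y = (y₁,…,y_m) in M_n(k), the following are equivalent: (i) for every p ∈ k⟨t₁,…,t_m⟩ the characteristic polynomials of ev_y(p) and ev_x(p) coincide; (ii) there exists an invertible matrix g ∈ GL_n(k) with y_i = g·x_i·g⁻¹ for all i = 1,…,m. In other words, the set of tuples on which all invariant characteristic-polynomial functions agree with their values at x is exactly the simultaneous-conjugation orbit of x. -/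
/-!
Let `f = ev_x` and `g = ev_y`. The image under `f` of the two-sided ideal `ker g` is a two-sided
ideal of the simple ring `M_n(k)` whose elements have characteristic polynomial `Xⁿ`, so it does
not contain `1` and hence vanishes: `ker g ≤ ker f`. Since `f` is onto, a dimension count makes `g`
onto as well, so `f = φ ∘ g` for an endomorphism `φ` of `M_n(k)`, which is an automorphism because
`M_n(k)` is simple. By Skolem–Noether `φ` is inner, and the conjugating matrix carries `y` to `x`.
-/

open Matrix

theorem Matrix.ker_le_ker_of_charpoly_eq {K A ι : Type*} [Field K] [Ring A] [Fintype ι]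
    [DecidableEq ι] [Nonempty ι] {f g : A →+* Matrix ι ι K} (hf : Function.Surjective f)
    (hfg : ∀ a, (g a).charpoly = (f a).charpoly) : RingHom.ker g ≤ RingHom.ker f := by
  have : RingHomSurjective f := ⟨hf⟩
  rcases (isSimpleRing_iff_isTwoSided_imp.mp inferInstance).2 ((RingHom.ker g).map f)
    inferInstance with h | h
  · intro a ha
    simpa [h] using Ideal.mem_map_of_mem f ha
  · obtain ⟨a, ha, h1⟩ := (Ideal.mem_map_iff_of_surjective f hf).1
      (h ▸ Submodule.mem_top : (1 : Matrix ι ι K) ∈ (RingHom.ker g).map f)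
    have := congrArg (Polynomial.eval 1) (hfg a)
    simp [RingHom.mem_ker.1 ha, h1, charpoly_zero, charpoly_one] at this

theorem AlgHom.exists_comp_eq_of_ker_le {K A B C : Type*} [CommRing K] [Ring A] [Algebra K A]
    [Ring B] [Algebra K B] [Ring C] [Algebra K C] {f : A →ₐ[K] C} {g : A →ₐ[K] B}
    (hg : Function.Surjective g) (hgf : RingHom.ker g ≤ RingHom.ker f) :
    ∃ ψ : B →ₐ[K] C, ψ.comp g = f := by
  refine ⟨(Ideal.Quotient.liftₐ _ f hgf).comp
    (Ideal.quotientKerAlgEquivOfSurjective hg).symm.toAlgHom, AlgHom.ext fun a => ?_⟩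
  show Ideal.Quotient.liftₐ _ f hgf ((Ideal.quotientKerAlgEquivOfSurjective hg).symm (g a)) = f a
  rw [Ideal.quotientKerAlgEquivOfSurjective_symm_apply]
  rfl

theorem AlgHom.surjective_of_ker_le {K A B : Type*} [Field K] [Ring A] [Algebra K A] [Ring B]
    [Algebra K B] [FiniteDimensional K B] {f g : A →ₐ[K] B} (hf : Function.Surjective f)
    (hgf : RingHom.ker g ≤ RingHom.ker f) : Function.Surjective g := by
  obtain ⟨ψ, hψ⟩ := exists_comp_eq_of_ker_le g.rangeRestrict_surjective
    (g.ker_rangeRestrict ▸ hgf : RingHom.ker g.rangeRestrict ≤ RingHom.ker f)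
  have hψ_surj : Function.Surjective ψ := .of_comp (hψ ▸ hf : Function.Surjective (ψ.comp _))
  have hrank : Module.finrank K B ≤ Module.finrank K g.range :=
    LinearMap.finrank_le_finrank_of_surjective (f := ψ.toLinearMap) hψ_surj
  have : g.range = ⊤ := Algebra.toSubmodule_eq_top.1 <|
    Submodule.eq_top_of_finrank_eq (le_antisymm (Submodule.finrank_le _) hrank)
  exact (AlgHom.range_eq_top g).1 this

theorem AlgHom.exists_algEquiv_comp_eq_of_ker_le {K A B : Type*} [Field K] [Ring A]
    [Algebra K A] [Ring B] [Algebra K B] [FiniteDimensional K B] [IsSimpleRing B]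
    {f g : A →ₐ[K] B} (hf : Function.Surjective f) (hgf : RingHom.ker g ≤ RingHom.ker f) :
    ∃ φ : B ≃ₐ[K] B, (φ : B →ₐ[K] B).comp g = f := by
  obtain ⟨ψ, hψ⟩ := exists_comp_eq_of_ker_le (surjective_of_ker_le hf hgf) hgf
  have hψ_surj : Function.Surjective ψ := .of_comp (hψ ▸ hf : Function.Surjective (ψ.comp g))
  exact ⟨.ofBijective ψ ⟨RingHom.injective (ψ : B →+* B), hψ_surj⟩, hψ⟩

theorem Matrix.exists_conj_of_algEquiv {K ι : Type*} [Field K] [Fintype ι] [DecidableEq ι]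
    (φ : Matrix ι ι K ≃ₐ[K] Matrix ι ι K) :
    ∃ u : GL ι K, ∀ a, φ a = (u : Matrix ι ι K) * a * (↑u⁻¹ : Matrix ι ι K) := by
  obtain ⟨T, hT⟩ :=
    (toLinAlgEquiv'.symm.trans (φ.trans toLinAlgEquiv')).eq_linearEquivConjAlgEquiv
  refine ⟨Units.map toLinAlgEquiv'.symm.toMonoidHom
    (LinearMap.GeneralLinearGroup.ofLinearEquiv T), fun a => toLinAlgEquiv'.injective ?_⟩
  have hφa := congrArg (· (toLinAlgEquiv' a)) hT
  simp only [AlgEquiv.trans_apply, AlgEquiv.symm_apply_apply] at hφa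
  rw [hφa, LinearEquiv.conjAlgEquiv_apply, map_mul, map_mul]
  simp only [toLinAlgEquiv'_symm, MulEquiv.toMonoidHom_eq_coe, Units.coe_map, MonoidHom.coe_coe,
    MulEquiv.coe_mk, AlgEquiv.toEquiv_eq_coe, EquivLike.coe_coe,
    toLinAlgEquiv'_toMatrixAlgEquiv', Units.coe_map_inv]
  rfl

theorem stmt_1_general (k : Type*) [Field k] (m n : ℕ) [NeZero n]
    (x : Fin m → Matrix (Fin n) (Fin n) k)
    (hx : Algebra.adjoin k (Set.range x) = ⊤)
    (y : Fin m → Matrix (Fin n) (Fin n) k) :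
    (∀ p : FreeAlgebra k (Fin m),
        ((FreeAlgebra.lift k y) p).charpoly = ((FreeAlgebra.lift k x) p).charpoly) ↔
    ∃ g : GL (Fin n) k, ∀ i : Fin m,
        y i = (g : Matrix (Fin n) (Fin n) k) * x i * (↑g⁻¹ : Matrix (Fin n) (Fin n) k) := by
  constructor
  · intro H
    have hx_surj : Function.Surjective (FreeAlgebra.lift k x) := by
      rwa [← AlgHom.range_eq_top, ← Algebra.adjoin_range_eq_range_freeAlgebra_lift]
    obtain ⟨φ, hφ⟩ := AlgHom.exists_algEquiv_comp_eq_of_ker_le hx_surj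
      (Matrix.ker_le_ker_of_charpoly_eq (f := (FreeAlgebra.lift k x).toRingHom)
        (g := (FreeAlgebra.lift k y).toRingHom) hx_surj H)
    obtain ⟨u, hu⟩ := Matrix.exists_conj_of_algEquiv φ
    refine ⟨u⁻¹, fun i => ?_⟩
    have hxi : φ (y i) = x i := by simpa using DFunLike.congr_fun hφ (FreeAlgebra.ι k i)
    rw [← hxi, hu, inv_inv]
    simp only [mul_assoc, Units.inv_mul_cancel_left, Units.inv_mul, mul_one]
  · rintro ⟨u, hu⟩ p
    have hconj : FreeAlgebra.lift k y =
        (MulSemiringAction.toAlgHom k _ (ConjAct.toConjAct u)).comp (FreeAlgebra.lift k x) :=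
      FreeAlgebra.hom_ext (funext fun i => by simp [hu i, ConjAct.units_smul_def])
    simp [hconj, ConjAct.units_smul_def, charpoly_units_conj]

/-- For a generating `m`-tuple `x` in `M_n(k)`, a tuple `y` satisfies
`charpoly (ev_y p) = charpoly (ev_x p)` for all `p` in the free algebra if and only if
`y` lies in the simultaneous-conjugation orbit of `x`. -/
theorem stmt_1 (k : Type*) [Field k] [IsAlgClosed k] (m n : ℕ) [NeZero m] [NeZero n]
    (x : Fin m → Matrix (Fin n) (Fin n) k)
    (hx : Algebra.adjoin k (Set.range x) = ⊤)
    (y : Fin m → Matrix (Fin n) (Fin n) k) :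
    (∀ p : FreeAlgebra k (Fin m),
        ((FreeAlgebra.lift k y) p).charpoly = ((FreeAlgebra.lift k x) p).charpoly) ↔
    ∃ g : GL (Fin n) k, ∀ i : Fin m,
        y i = (g : Matrix (Fin n) (Fin n) k) * x i * (↑g⁻¹ : Matrix (Fin n) (Fin n) k) :=
  stmt_1_general k m n x hx y
end

section
/- The ring R is a prime ring: for all a, b ∈ R, if a·r·b = 0 for every r ∈ R, then a = 0 or b = 0. -/
/-! The matrices `t • E_ij` lie in `R`, and the `(p, q)` entry of `a * (t • E_ij) * b` is
`a_pi * t * b_jq`; if `a, b ≠ 0`, choosing `a_pi ≠ 0` and `b_jq ≠ 0` makes this nonzero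
because `k[t]` is a domain. -/

open Matrix Polynomial

variable (k : Type*) [Field k]

/-- The `k`-subalgebra `R` of `S = M₂(k[t])` consisting of all matrices whose
lower-left entry lies in `t·k[t]`. -/
def lowerIdealSubalgebra : Subalgebra k (Matrix (Fin 2) (Fin 2) (Polynomial k)) where
  carrier := {M | M 1 0 ∈ Ideal.span {(X : Polynomial k)}}
  mul_mem' := by
    intro A B hA hB
    simp only [Set.mem_setOf_eq] at *
    rw [Matrix.mul_apply, Fin.sum_univ_two]
    exact Ideal.add_mem _ (Ideal.mul_mem_right _ _ hA) (Ideal.mul_mem_left _ _ hB)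
  add_mem' := by
    intro A B hA hB
    simp only [Set.mem_setOf_eq] at *
    exact Ideal.add_mem _ hA hB
  one_mem' := by
    simp only [Set.mem_setOf_eq, Matrix.one_apply_ne (by decide : (1 : Fin 2) ≠ 0)]
    exact Ideal.zero_mem _
  zero_mem' := by
    simp only [Set.mem_setOf_eq, Matrix.zero_apply]
    exact Ideal.zero_mem _
  algebraMap_mem' := by
    intro c
    simp only [Set.mem_setOf_eq, Matrix.algebraMap_matrix_apply,
      if_neg (by decide : ¬ (1 : Fin 2) = 0)]
    exact Ideal.zero_mem _

theorem Matrix.mul_single_mul_apply {n R : Type*} [Fintype n] [DecidableEq n]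
    [NonUnitalNonAssocSemiring R] (a b : Matrix n n R) (i j p q : n) (c : R) :
    (a * single i j c * b) p q = a p i * c * b j q := by
  rw [mul_apply, Finset.sum_eq_single j]
  · simp
  · intro x _ hx
    simp [hx]
  · simp

theorem Matrix.eq_zero_or_eq_zero_of_forall_mul_single_mul_eq_zero {n R : Type*} [Fintype n]
    [DecidableEq n] [NonUnitalNonAssocSemiring R] [NoZeroDivisors R] {a b : Matrix n n R}
    {c : R} (hc : c ≠ 0) (h : ∀ i j, a * single i j c * b = 0) : a = 0 ∨ b = 0 := by
  by_contra! ⟨ha, hb⟩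
  obtain ⟨p, i, hpi⟩ : ∃ p i, a p i ≠ 0 := by simpa [← Matrix.ext_iff] using ha
  obtain ⟨j, q, hjq⟩ : ∃ j q, b j q ≠ 0 := by simpa [← Matrix.ext_iff] using hb
  have hpq := congr_fun₂ (h i j) p q
  rw [mul_single_mul_apply, zero_apply] at hpq
  exact mul_ne_zero (mul_ne_zero hpi hc) hjq hpq

theorem single_X_mem_lowerIdealSubalgebra (i j : Fin 2) :
    single i j (X : k[X]) ∈ lowerIdealSubalgebra k := by
  change single i j X 1 0 ∈ Ideal.span {X}
  rw [single_apply]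
  split_ifs
  · exact Ideal.mem_span_singleton_self X
  · exact Ideal.zero_mem _

/-- `R` is a prime ring: if `a·r·b = 0` for all `r ∈ R`, then `a = 0` or
`b = 0`. -/
theorem stmt_10 (a b : lowerIdealSubalgebra k)
    (h : ∀ r : lowerIdealSubalgebra k, a * r * b = 0) :
    a = 0 ∨ b = 0 := by
  have hab : ∀ i j,
      (a : Matrix (Fin 2) (Fin 2) k[X]) * single i j X * (b : Matrix (Fin 2) (Fin 2) k[X]) = 0 :=
    fun i j => congr_arg Subtype.val (h ⟨_, single_X_mem_lowerIdealSubalgebra k i j⟩)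
  simpa only [ZeroMemClass.coe_eq_zero] using
    eq_zero_or_eq_zero_of_forall_mul_single_mul_eq_zero X_ne_zero hab
end

section
/- Assume m ≥ 2. Then every central element of the trace ring T_{m,n} is a scalar matrix: if z ∈ T_{m,n} satisfies z·w = w·z for all w ∈ T_{m,n}, then z = c·I for some polynomial c ∈ P. Consequently the center of T_{m,n} may be identified with a subring of the ring of PGL_n-invariant polynomial functions on M_n(k)^m. -/
/-!
The words `X ^ a * Y ^ b` (`a, b < n`) in two generic matrices lie in `T_{m,n}` and are linearly
independent over `P`: specializing `X` to a diagonal matrix with distinct entries and `Y` to the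
cyclic shift turns their entry matrix, after reordering rows, into a block diagonal matrix of
Vandermonde blocks. By Cramer's rule, `d • Eᵢⱼ` is then a `P`-combination of the words, where
`d ≠ 0` is their determinant, so a central element commutes with every matrix unit and is scalar.
-/

open Matrix MvPolynomial

noncomputable section

variable (k : Type*) [Field k] (m n : ℕ)

/-- The commutative polynomial ring `P = k[x_{ij}^{(h)}]` in the `m·n²` entries of `m`
generic `n×n` matrices. -/
abbrev GenPolyRing := MvPolynomial (Fin m × Fin n × Fin n) k

/-- The `h`-th generic `n×n` matrix, whose `(i,j)`-entry is the variable `x_{ij}^{(h)}`. -/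
def genericMatrix (h : Fin m) : Matrix (Fin n) (Fin n) (GenPolyRing k m n) :=
  Matrix.of fun i j => MvPolynomial.X (h, i, j)

/-- The generic matrix algebra `G_{m,n}`: the `k`-subalgebra of `M_n(P)` generated by the
generic matrices `X₁, …, X_m`. -/
def genericMatrixAlgebra : Subalgebra k (Matrix (Fin n) (Fin n) (GenPolyRing k m n)) :=
  Algebra.adjoin k (Set.range (genericMatrix k m n))

/-- The trace ring `T_{m,n}`: the `k`-subalgebra of `M_n(P)` generated by `G_{m,n}`
together with all scalar matrices `c·I` where `c` is a coefficient of the characteristic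
polynomial of an element of `G_{m,n}`. -/
def traceRing : Subalgebra k (Matrix (Fin n) (Fin n) (GenPolyRing k m n)) :=
  Algebra.adjoin k (Set.range (genericMatrix k m n) ∪
    {w | ∃ p ∈ genericMatrixAlgebra k m n, ∃ s : ℕ,
      w = (Matrix.charpoly p).coeff s • (1 : Matrix (Fin n) (Fin n) (GenPolyRing k m n))})

namespace Matrix

variable {R ι κ : Type*} [Fintype ι] [DecidableEq ι]

section EntryMatrix

def entryMatrix (W : κ → Matrix ι ι R) : Matrix (ι × ι) κ R :=
  of fun p q => W q p.1 p.2

omit [Fintype ι] [DecidableEq ι] in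
lemma entryMatrix_map {S : Type*} (W : κ → Matrix ι ι R) (f : R → S) :
    (entryMatrix W).map f = entryMatrix fun q => (W q).map f :=
  rfl

variable [CommRing R]

lemma sum_cramer_smul_eq_det_smul_single (W : ι × ι → Matrix ι ι R) (i j : ι) :
    ∑ q, cramer (entryMatrix W) (Pi.single (i, j) 1) q • W q
      = (entryMatrix W).det • single i j 1 := by
  ext a b
  calc (∑ q, cramer (entryMatrix W) (Pi.single (i, j) 1) q • W q) a b
      = (entryMatrix W *ᵥ cramer (entryMatrix W) (Pi.single (i, j) 1)) (a, b) := by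
        simp [mulVec, dotProduct, entryMatrix, sum_apply, mul_comm]
    _ = ((entryMatrix W).det • single i j 1) a b := by
        rw [mulVec_cramer]
        simp [single_apply, Pi.single_apply, Prod.ext_iff, eq_comm]

lemma commute_single_of_det_entryMatrix_ne_zero [IsDomain R]
    {W : ι × ι → Matrix ι ι R} (hW : (entryMatrix W).det ≠ 0) {z : Matrix ι ι R}
    (hz : ∀ q, Commute (W q) z) (i j : ι) : Commute (single i j 1) z := by
  have hdet : Commute ((entryMatrix W).det • single i j 1) z := by
    rw [← sum_cramer_smul_eq_det_smul_single]
    exact Commute.sum_left _ _ _ fun q _ => (hz q).smul_left _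
  unfold Commute SemiconjBy at hdet ⊢
  rw [smul_mul_assoc, mul_smul_comm] at hdet
  exact smul_right_injective _ hW hdet

end EntryMatrix

section CyclicShift

variable (R) [NeZero n]

def cyclicShift [Zero R] [One R] : Matrix (Fin n) (Fin n) R :=
  of fun i j => if j = i + 1 then 1 else 0

open Fin.NatCast in
lemma cyclicShift_pow_apply [Semiring R] (b : ℕ) (i j : Fin n) :
    (cyclicShift n R ^ b) i j = if j = i + (b : Fin n) then 1 else 0 := by
  induction b generalizing i j with
  | zero => simp [one_apply, eq_comm]
  | succ b ih =>
    rw [pow_succ, mul_apply]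
    simp only [ih]
    simp only [cyclicShift, of_apply, ite_mul, one_mul, zero_mul,
      Finset.sum_ite_eq' Finset.univ (i + (b : Fin n))]
    simp [add_assoc]

variable {R n}

lemma det_entryMatrix_diagonal_pow_mul_cyclicShift_pow_ne_zero [CommRing R] [IsDomain R]
    {e : Fin n → R} (he : Function.Injective e) :
    (entryMatrix fun q : Fin n × Fin n =>
      diagonal e ^ (q.1 : ℕ) * cyclicShift n R ^ (q.2 : ℕ)).det ≠ 0 := by
  set N := entryMatrix fun q : Fin n × Fin n =>
    diagonal e ^ (q.1 : ℕ) * cyclicShift n R ^ (q.2 : ℕ)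
  -- reindexing the rows by `(i, b) ↦ (i, i + b)` exposes `n` Vandermonde blocks
  let τ : Equiv.Perm (Fin n × Fin n) := Equiv.prodShear (Equiv.refl _) fun i => Equiv.addLeft i
  have hblock : N.submatrix τ id = blockDiagonal fun _ => vandermonde e := by
    ext ⟨i, b'⟩ ⟨a, b⟩
    simp only [N, τ, entryMatrix, submatrix_apply, Equiv.prodShear_apply, Equiv.coe_refl, id_eq,
      of_apply, diagonal_pow, diagonal_mul, cyclicShift_pow_apply, Fin.cast_val_eq_self,
      blockDiagonal_apply, vandermonde, Pi.pow_apply, Equiv.coe_addLeft, add_right_inj]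
    split <;> simp
  have hvdm : (blockDiagonal fun _ : Fin n => vandermonde e).det ≠ 0 := by
    rw [det_blockDiagonal]
    exact Finset.prod_ne_zero_iff.mpr fun _ _ => det_vandermonde_ne_zero_iff.mpr he
  rw [← hblock, det_permute] at hvdm
  exact right_ne_zero_of_mul hvdm

end CyclicShift

end Matrix

section GenericMatrix

variable {k m n}

lemma genericMatrix_map_aeval (A : Fin m → Matrix (Fin n) (Fin n) k) (h : Fin m) :
    (genericMatrix k m n h).map (aeval fun v => A v.1 v.2.1 v.2.2) = A h := by
  ext i j
  simp [genericMatrix]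

lemma genericMatrix_mem_traceRing (h : Fin m) : genericMatrix k m n h ∈ traceRing k m n :=
  Algebra.subset_adjoin (Or.inl ⟨h, rfl⟩)

end GenericMatrix

/-- if `m ≥ 2`, every central element of the trace ring `T_{m,n}` is a
scalar matrix `c·I` with `c ∈ P`; thus the center of `T_{m,n}` is identified with a
subring of the `PGL_n`-invariant polynomial functions on `M_n(k)^m`. -/
theorem stmt_12 [IsAlgClosed k] [NeZero n] (hm : 2 ≤ m) :
    ∀ z ∈ traceRing k m n, (∀ w ∈ traceRing k m n, z * w = w * z) →
      ∃ c : GenPolyRing k m n,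
        z = c • (1 : Matrix (Fin n) (Fin n) (GenPolyRing k m n)) := by
  intro z _ hz
  let X := genericMatrix k m n ⟨0, by omega⟩
  let Y := genericMatrix k m n ⟨1, by omega⟩
  let words : Fin n × Fin n → Matrix (Fin n) (Fin n) (GenPolyRing k m n) :=
    fun q => X ^ (q.1 : ℕ) * Y ^ (q.2 : ℕ)
  -- specialize `X` to a diagonal matrix with distinct entries and `Y` to the cyclic shift
  let e : Fin n ↪ k := Fin.valEmbedding.trans (Infinite.natEmbedding k)
  let A : Fin m → Matrix (Fin n) (Fin n) k :=
    fun h => if (h : ℕ) = 0 then diagonal e else cyclicShift n k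
  let φ : GenPolyRing k m n →ₐ[k] k := aeval fun v => A v.1 v.2.1 v.2.2
  have hφ : (entryMatrix words).map φ = entryMatrix fun q : Fin n × Fin n =>
      diagonal e ^ (q.1 : ℕ) * cyclicShift n k ^ (q.2 : ℕ) := by
    rw [entryMatrix_map]
    congr with q : 1
    rw [← AlgHom.mapMatrix_apply, map_mul, map_pow, map_pow, AlgHom.mapMatrix_apply,
      AlgHom.mapMatrix_apply, genericMatrix_map_aeval, genericMatrix_map_aeval]
    simp [A]
  have hdet : (entryMatrix words).det ≠ 0 := fun h0 =>
    det_entryMatrix_diagonal_pow_mul_cyclicShift_pow_ne_zero e.injective <| by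
      rw [← hφ, ← AlgHom.mapMatrix_apply, ← AlgHom.map_det, h0, map_zero]
  have hwords : ∀ q, Commute (words q) z := fun q => (hz _ <| mul_mem
    (pow_mem (genericMatrix_mem_traceRing _) _) (pow_mem (genericMatrix_mem_traceRing _) _)).symm
  obtain ⟨c, rfl⟩ := mem_range_scalar_iff_commute_single'.mpr
    (commute_single_of_det_entryMatrix_ne_zero hdet hwords)
  exact ⟨c, (smul_one_eq_diagonal c).symm⟩

end
end

section
/- Every surjective k-algebra homomorphism φ : T_{m,n} → M_n(k) is an evaluation map: setting a ∈ M_n(k)^m to be the tuple (φ(X₁),…,φ(X_m)), one has φ(p) = p(a) for every p ∈ T_{m,n}, where p(a) denotes the evaluation of p at the tuple a. -/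
open Matrix MvPolynomial

noncomputable section

variable (k : Type*) [Field k] (m n : ℕ)

/-- Evaluation at a tuple `x ∈ M_n(k)^m`: the `k`-algebra homomorphism
`M_n(P) → M_n(k)` substituting the entries of `x` for the variables `x_{ij}^{(h)}`. -/
def evalAt (x : Fin m → Matrix (Fin n) (Fin n) k) :
    Matrix (Fin n) (Fin n) (GenPolyRing k m n) →ₐ[k] Matrix (Fin n) (Fin n) k :=
  (MvPolynomial.aeval fun v : Fin m × Fin n × Fin n => x v.1 v.2.1 v.2.2).mapMatrix


/-! `φ` agrees with evaluation at `a = (φ(X₁), …, φ(X_m))` on the generic matrices, hence on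
`G_{m,n}`; it remains to see that `φ(c_s(q)·I) = c_s(q(a))·I` for the characteristic coefficients
of `q ∈ G_{m,n}`. Surjectivity makes `φ(c_s(q)·I)` central, i.e. a scalar `λ_s·I`, and applying `φ`
to Cayley–Hamilton for `q` shows that `Xⁿ + ∑_{s<n} λ_s Xˢ` annihilates `M = q(a)`. When `M` is
cyclic this monic polynomial must be the characteristic polynomial of `M`, which settles that case.
For general `q`, surjectivity of evaluation on `G_{m,n}` gives `g ∈ G_{m,n}` such that `q + g`
evaluates to a diagonal matrix with distinct entries, which is cyclic; hence `q + t g` evaluates to a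
cyclic matrix for all but finitely many `t ∈ k`. Each `c_s(q + t g)` is a polynomial in `t`, and
its constant term `c_s(q)` is a `k`-linear combination of its values at infinitely many `t`. -/

variable {k m n}

namespace Matrix

section Krylov

variable {R : Type*} [CommRing R]

def krylovMatrix (M : Matrix (Fin n) (Fin n) R) (v : Fin n → R) : Matrix (Fin n) (Fin n) R :=
  of fun i r => (M ^ (r : ℕ) *ᵥ v) i

lemma krylovMatrix_mulVec (M : Matrix (Fin n) (Fin n) R) (v c : Fin n → R) :
    krylovMatrix M v *ᵥ c = (∑ r, c r • M ^ (r : ℕ)) *ᵥ v := by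
  ext i
  rw [sum_mulVec, Finset.sum_apply]
  simp [krylovMatrix, mulVec, dotProduct, Finset.mul_sum, mul_comm, mul_left_comm]

lemma krylovMatrix_map {S : Type*} [CommRing S] (f : R →+* S) (M : Matrix (Fin n) (Fin n) R)
    (v : Fin n → R) : (krylovMatrix M v).map f = krylovMatrix (M.map f) (f ∘ v) := by
  ext i r
  simp [krylovMatrix, ← RingHom.mapMatrix_apply, ← map_pow, RingHom.map_mulVec]

lemma krylovMatrix_diagonal_one (d : Fin n → R) :
    krylovMatrix (diagonal d) 1 = vandermonde d := by
  ext i r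
  simp [krylovMatrix, diagonal_pow, vandermonde, mulVec_diagonal]

lemma pow_add_sum_charpoly_coeff_smul_pow_eq_zero [Nontrivial R] (A : Matrix (Fin n) (Fin n) R) :
    A ^ n + ∑ i : Fin n, A.charpoly.coeff i • A ^ (i : ℕ) = 0 := by
  have hdeg : A.charpoly.natDegree = n := by rw [charpoly_natDegree_eq_dim, Fintype.card_fin]
  have := aeval_self_charpoly A
  rw [A.charpoly_monic.as_sum, hdeg] at this
  simpa [Fin.sum_univ_eq_sum_range (fun i => A.charpoly.coeff i • A ^ i),
    Algebra.algebraMap_eq_smul_one] using this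

variable [IsDomain R] {M : Matrix (Fin n) (Fin n) R} {v : Fin n → R}

lemma eq_zero_of_aeval_eq_zero_of_det_krylovMatrix_ne_zero (hK : (krylovMatrix M v).det ≠ 0)
    {p : Polynomial R} (hp : p.degree < n) (h : Polynomial.aeval M p = 0) : p = 0 := by
  by_cases hp0 : p = 0
  · exact hp0
  have hnat : p.natDegree < n := by
    rwa [Polynomial.degree_eq_natDegree hp0, Nat.cast_lt] at hp
  have hcoeff : (fun r : Fin n => p.coeff r) = 0 := by
    apply mulVec_injective_of_det_ne_zero hK
    rw [krylovMatrix_mulVec, mulVec_zero, Fin.sum_univ_eq_sum_range (fun r => p.coeff r • M ^ r),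
      ← Polynomial.aeval_eq_sum_range' hnat, h, zero_mulVec]
  ext j
  rcases lt_or_ge j n with hj | hj
  · exact congrFun hcoeff ⟨j, hj⟩
  · exact Polynomial.coeff_eq_zero_of_natDegree_lt (hnat.trans_le hj)

lemma eq_charpoly_of_monic_of_aeval_eq_zero (hK : (krylovMatrix M v).det ≠ 0)
    {f : Polynomial R} (hf : f.Monic) (hdeg : f.natDegree = n) (h : Polynomial.aeval M f = 0) :
    f = M.charpoly := by
  have hdeg_f : f.degree = n := by rw [Polynomial.degree_eq_natDegree hf.ne_zero, hdeg]
  have hdeg_χ : M.charpoly.degree = n := by rw [charpoly_degree_eq_dim, Fintype.card_fin]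
  refine sub_eq_zero.1 (eq_zero_of_aeval_eq_zero_of_det_krylovMatrix_ne_zero hK ?_ ?_)
  · rw [← hdeg_f]
    exact Polynomial.degree_sub_lt_left (hdeg_f.trans hdeg_χ.symm) hf.ne_zero
      (hf.leadingCoeff.trans M.charpoly_monic.leadingCoeff.symm)
  · rw [map_sub, h, aeval_self_charpoly, sub_zero]

end Krylov

section Pencil

variable {R : Type*} [CommRing R]

def pencil (A E : Matrix (Fin n) (Fin n) R) : Matrix (Fin n) (Fin n) (Polynomial R) :=
  A.map Polynomial.C + (Polynomial.X : Polynomial R) • E.map Polynomial.C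

lemma pencil_map_evalRingHom (A E : Matrix (Fin n) (Fin n) R) (a : R) :
    (pencil A E).map (Polynomial.evalRingHom a) = A + a • E := by
  ext i j
  simp [pencil, mul_comm a]

lemma eval_charpoly_coeff_pencil (A E : Matrix (Fin n) (Fin n) R) (a : R) (s : ℕ) :
    ((pencil A E).charpoly.coeff s).eval a = (A + a • E).charpoly.coeff s := by
  rw [← pencil_map_evalRingHom, charpoly_map, Polynomial.coeff_map, Polynomial.coe_evalRingHom]

lemma eval_det_krylovMatrix_pencil (A E : Matrix (Fin n) (Fin n) R) (v : Fin n → R) (a : R) :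
    (krylovMatrix (pencil A E) (Polynomial.C ∘ v)).det.eval a =
      (krylovMatrix (A + a • E) v).det := by
  rw [← Polynomial.coe_evalRingHom, RingHom.map_det, RingHom.mapMatrix_apply, krylovMatrix_map,
    pencil_map_evalRingHom]
  congr 2
  ext
  simp

lemma finite_setOf_det_krylovMatrix_eq_zero [IsDomain R] (A E : Matrix (Fin n) (Fin n) R)
    (v : Fin n → R) {t₀ : R} (h : (krylovMatrix (A + t₀ • E) v).det ≠ 0) :
    {t : R | (krylovMatrix (A + t • E) v).det = 0}.Finite := by
  have hne : (krylovMatrix (pencil A E) (Polynomial.C ∘ v)).det ≠ 0 := fun h0 =>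
    h (by rw [← eval_det_krylovMatrix_pencil, h0, Polynomial.eval_zero])
  simpa [Polynomial.IsRoot, eval_det_krylovMatrix_pencil] using
    Polynomial.finite_setOfPred_isRoot hne

end Pencil

end Matrix

/-- A functional `ℓ` vanishing on `V` turns `t ↦ ℓ (u.eval t)` into a polynomial over `K` with
infinitely many roots. -/
lemma Polynomial.coeff_mem_of_eval_mem {K A : Type*} [Field K] [CommRing A] [Algebra K A]
    (V : Submodule K A) (u : Polynomial A) {S : Set K} (hS : S.Infinite)
    (h : ∀ t ∈ S, u.eval (algebraMap K A t) ∈ V) (j : ℕ) : u.coeff j ∈ V := by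
  by_contra hj
  obtain ⟨ℓ, hℓj, hVℓ⟩ := V.exists_le_ker_of_notMem hj
  set p : Polynomial K := ∑ i ∈ Finset.range (u.natDegree + 1), C (ℓ (u.coeff i)) * X ^ i
  have hp : ∀ t, p.eval t = ℓ (u.eval (algebraMap K A t)) := fun t => by
    rw [eval_eq_sum_range (p := u), map_sum, eval_finsetSum]
    refine Finset.sum_congr rfl fun i _ => ?_
    rw [eval_C_mul, eval_X_pow, ← map_pow, ← Algebra.commutes, ← Algebra.smul_def, map_smul,
      smul_eq_mul, mul_comm]
  have hp0 : p = 0 := eq_zero_of_infinite_isRoot p <| hS.mono fun t ht => by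
    simpa [IsRoot, hp] using hVℓ (h t ht)
  refine hℓj ?_
  have hcoeff := congrArg (coeff · j) hp0
  simp only [p, finsetSum_coeff, coeff_C_mul_X_pow, Finset.sum_ite_eq, Finset.mem_range,
    coeff_zero] at hcoeff
  split_ifs at hcoeff with hj
  · exact hcoeff
  · rw [coeff_eq_zero_of_natDegree_lt (by omega), map_zero]

lemma genericMatrixAlgebra_le_traceRing : genericMatrixAlgebra k m n ≤ traceRing k m n :=
  Algebra.adjoin_mono Set.subset_union_left

lemma charpoly_coeff_smul_one_mem_traceRing {q : Matrix (Fin n) (Fin n) (GenPolyRing k m n)}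
    (hq : q ∈ genericMatrixAlgebra k m n) (s : ℕ) :
    q.charpoly.coeff s • (1 : Matrix (Fin n) (Fin n) (GenPolyRing k m n)) ∈ traceRing k m n :=
  Algebra.subset_adjoin (Or.inr ⟨q, hq, s, rfl⟩)

def evalScalar (x : Fin m → Matrix (Fin n) (Fin n) k) : GenPolyRing k m n →ₐ[k] k :=
  MvPolynomial.aeval fun v => x v.1 v.2.1 v.2.2

lemma evalAt_genericMatrix (x : Fin m → Matrix (Fin n) (Fin n) k) (h : Fin m) :
    evalAt k m n x (genericMatrix k m n h) = x h := by
  ext i j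
  simp [evalAt, genericMatrix]

lemma evalAt_smul_one (x : Fin m → Matrix (Fin n) (Fin n) k) (c : GenPolyRing k m n) :
    evalAt k m n x (c • 1) = evalScalar x c • 1 := by
  ext i j
  by_cases h : i = j <;> simp [evalAt, evalScalar, one_apply, h]

lemma charpoly_coeff_evalAt (x : Fin m → Matrix (Fin n) (Fin n) k)
    (M : Matrix (Fin n) (Fin n) (GenPolyRing k m n)) (s : ℕ) :
    (evalAt k m n x M).charpoly.coeff s = evalScalar x (M.charpoly.coeff s) := by
  rw [evalAt, AlgHom.mapMatrix_apply, ← AlgHom.coe_toRingHom, charpoly_map,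
    Polynomial.coeff_map]
  rfl

def genericImages (φ : traceRing k m n →ₐ[k] Matrix (Fin n) (Fin n) k) :
    Fin m → Matrix (Fin n) (Fin n) k :=
  fun i => φ ⟨genericMatrix k m n i, Algebra.subset_adjoin (Or.inl (Set.mem_range_self i))⟩

section

variable (φ : traceRing k m n →ₐ[k] Matrix (Fin n) (Fin n) k)

lemma map_eq_evalAt_of_mem_genericMatrixAlgebra {q : Matrix (Fin n) (Fin n) (GenPolyRing k m n)}
    (hq : q ∈ genericMatrixAlgebra k m n) :
    φ ⟨q, genericMatrixAlgebra_le_traceRing hq⟩ = evalAt k m n (genericImages φ) q := by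
  have : φ.comp (Subalgebra.inclusion (genericMatrixAlgebra_le_traceRing (k := k))) =
      (evalAt k m n (genericImages φ)).comp (genericMatrixAlgebra k m n).val :=
    AlgHom.adjoin_ext fun _ ⟨i, hi⟩ => by
      subst hi
      exact (evalAt_genericMatrix (genericImages φ) i).symm
  exact congr($this ⟨q, hq⟩)

/-- The `c ∈ P` with `c • 1 ∈ T_{m,n}` on which `φ` agrees with evaluation at the generic images
(see `mem_scalarAgreement_iff`). -/
def scalarAgreement : Submodule k (GenPolyRing k m n) :=
  (Subalgebra.toSubmodule ((AlgHom.equalizer φ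
      ((evalAt k m n (genericImages φ)).comp (traceRing k m n).val)).map
    (traceRing k m n).val)).comap
    (LinearMap.smulRight (LinearMap.id : GenPolyRing k m n →ₗ[k] GenPolyRing k m n)
      (1 : Matrix (Fin n) (Fin n) (GenPolyRing k m n)))

lemma mem_scalarAgreement_iff {c : GenPolyRing k m n}
    (hc : c • (1 : Matrix (Fin n) (Fin n) (GenPolyRing k m n)) ∈ traceRing k m n) :
    c ∈ scalarAgreement φ ↔ φ ⟨c • 1, hc⟩ = evalAt k m n (genericImages φ) (c • 1) := by
  simp only [scalarAgreement, Submodule.mem_comap, LinearMap.smulRight_apply, LinearMap.id_apply,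
    Subalgebra.mem_toSubmodule, Subalgebra.mem_map, AlgHom.mem_equalizer]
  constructor
  · rintro ⟨y, hy, hyc⟩
    obtain rfl : y = ⟨c • 1, hc⟩ := Subtype.ext hyc
    exact hy
  · exact fun h => ⟨⟨c • 1, hc⟩, h, rfl⟩

end

variable {φ : traceRing k m n →ₐ[k] Matrix (Fin n) (Fin n) k}

lemma exists_map_eq_smul_one (hφ : Function.Surjective φ) {c : GenPolyRing k m n}
    (hc : c • (1 : Matrix (Fin n) (Fin n) (GenPolyRing k m n)) ∈ traceRing k m n) :
    ∃ α : k, φ ⟨c • 1, hc⟩ = α • 1 := by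
  have hcomm : ∀ Y, Commute Y (φ ⟨c • 1, hc⟩) := by
    intro Y
    obtain ⟨y, rfl⟩ := hφ Y
    rw [Commute, SemiconjBy, ← map_mul, ← map_mul]
    congr 1
    exact Subtype.ext (by simp)
  obtain ⟨α, hα⟩ := mem_range_scalar_of_commute_single fun i j _ => hcomm _
  exact ⟨α, by rw [← hα, scalar_apply, smul_one_eq_diagonal]⟩

lemma exists_mem_genericMatrixAlgebra_evalAt_eq (hφ : Function.Surjective φ)
    (Y : Matrix (Fin n) (Fin n) k) :
    ∃ g ∈ genericMatrixAlgebra k m n, evalAt k m n (genericImages φ) g = Y := by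
  suffices h : ((genericMatrixAlgebra k m n).map (evalAt k m n (genericImages φ))).comap φ = ⊤ by
    obtain ⟨x, rfl⟩ := hφ Y
    exact Subalgebra.mem_map.1 (h ▸ Algebra.mem_top : x ∈ _)
  refine eq_top_iff.2 (Algebra.adjoin_adjoin_coe_preimage.symm.le.trans (Algebra.adjoin_le ?_))
  rintro ⟨x, hx⟩ (⟨i, rfl⟩ | ⟨q, hq, s, rfl⟩)
  · exact ⟨_, Algebra.subset_adjoin ⟨i, rfl⟩, evalAt_genericMatrix _ i⟩
  · obtain ⟨α, hα⟩ := exists_map_eq_smul_one hφ hx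
    have : φ ⟨_, hx⟩ ∈ (genericMatrixAlgebra k m n).map (evalAt k m n (genericImages φ)) := by
      rw [hα, ← Algebra.algebraMap_eq_smul_one]
      exact Subalgebra.algebraMap_mem _ α
    exact this

lemma aeval_evalAt_eq_zero_of_map_charpoly_coeff_eq
    {q : Matrix (Fin n) (Fin n) (GenPolyRing k m n)} (hq : q ∈ genericMatrixAlgebra k m n)
    {c : ℕ → k} (hc : ∀ i, φ ⟨q.charpoly.coeff i • 1, charpoly_coeff_smul_one_mem_traceRing hq i⟩ =
      c i • 1) :
    Polynomial.aeval (evalAt k m n (genericImages φ) q)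
      (Polynomial.X ^ n + ∑ i : Fin n, Polynomial.C (c i) * Polynomial.X ^ (i : ℕ)) = 0 := by
  have hCH : (⟨q, genericMatrixAlgebra_le_traceRing hq⟩ : traceRing k m n) ^ n +
      ∑ i : Fin n, ⟨q.charpoly.coeff i • 1, charpoly_coeff_smul_one_mem_traceRing hq i⟩ *
        (⟨q, genericMatrixAlgebra_le_traceRing hq⟩ : traceRing k m n) ^ (i : ℕ) = 0 := by
    apply Subtype.ext
    simpa [smul_mul_assoc] using pow_add_sum_charpoly_coeff_smul_pow_eq_zero q
  have := congrArg φ hCH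
  simp only [map_add, map_sum, map_mul, map_pow, map_zero, hc,
    map_eq_evalAt_of_mem_genericMatrixAlgebra φ hq] at this
  simpa [Algebra.algebraMap_eq_smul_one, smul_mul_assoc] using this

lemma map_charpoly_coeff_smul_one_of_det_krylovMatrix_ne_zero (hφ : Function.Surjective φ)
    {q : Matrix (Fin n) (Fin n) (GenPolyRing k m n)} (hq : q ∈ genericMatrixAlgebra k m n)
    (hK : (krylovMatrix (evalAt k m n (genericImages φ) q) 1).det ≠ 0) (s : ℕ) :
    φ ⟨q.charpoly.coeff s • 1, charpoly_coeff_smul_one_mem_traceRing hq s⟩ =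
      evalAt k m n (genericImages φ) (q.charpoly.coeff s • 1) := by
  choose c hc using fun i =>
    exists_map_eq_smul_one hφ (charpoly_coeff_smul_one_mem_traceRing hq i)
  set f : Polynomial k :=
    Polynomial.X ^ n + ∑ i : Fin n, Polynomial.C (c i) * Polynomial.X ^ (i : ℕ)
  have hf : f.Monic := Polynomial.monic_X_pow_add (Polynomial.degree_sum_fin_lt _)
  have hfdeg : f.natDegree = n := by
    rw [Polynomial.natDegree_add_eq_left_of_degree_lt
      (by rw [Polynomial.degree_X_pow]; exact Polynomial.degree_sum_fin_lt _),
      Polynomial.natDegree_X_pow]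
  have hχ := eq_charpoly_of_monic_of_aeval_eq_zero hK hf hfdeg
    (aeval_evalAt_eq_zero_of_map_charpoly_coeff_eq hq hc)
  have hqdeg : q.charpoly.natDegree = n := by rw [charpoly_natDegree_eq_dim, Fintype.card_fin]
  rw [evalAt_smul_one, ← charpoly_coeff_evalAt, ← hχ]
  rcases lt_trichotomy s n with hs | hs | hs
  · rw [hc s]
    simp [f, Polynomial.coeff_X_pow, hs.ne, Polynomial.finsetSum_coeff,
      Fin.sum_univ_eq_sum_range (fun i => if s = i then c i else 0), hs]
  · have hq1 : q.charpoly.coeff s = 1 := by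
      rw [hs, ← congrArg q.charpoly.coeff hqdeg]
      exact q.charpoly_monic.coeff_natDegree
    have hf1 : f.coeff s = 1 := by
      rw [hs, ← hfdeg]
      exact hf.coeff_natDegree
    have : (⟨q.charpoly.coeff s • 1, charpoly_coeff_smul_one_mem_traceRing hq s⟩ :
        traceRing k m n) = 1 := Subtype.ext (by simp [hq1])
    rw [this, map_one, hf1, one_smul]
  · have hq0 : q.charpoly.coeff s = 0 :=
      Polynomial.coeff_eq_zero_of_natDegree_lt (by rwa [hqdeg])
    have : (⟨q.charpoly.coeff s • 1, charpoly_coeff_smul_one_mem_traceRing hq s⟩ :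
        traceRing k m n) = 0 := Subtype.ext (by simp [hq0])
    rw [this, map_zero, Polynomial.coeff_eq_zero_of_natDegree_lt (by rwa [hfdeg]), zero_smul]

lemma map_charpoly_coeff_smul_one [Infinite k] (hφ : Function.Surjective φ)
    {q : Matrix (Fin n) (Fin n) (GenPolyRing k m n)} (hq : q ∈ genericMatrixAlgebra k m n)
    (s : ℕ) :
    φ ⟨q.charpoly.coeff s • 1, charpoly_coeff_smul_one_mem_traceRing hq s⟩ =
      evalAt k m n (genericImages φ) (q.charpoly.coeff s • 1) := by
  set B := evalAt k m n (genericImages φ) q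
  set d : Fin n → k := fun i => Infinite.natEmbedding k i
  have hd : Function.Injective d := (Infinite.natEmbedding k).injective.comp Fin.val_injective
  obtain ⟨g, hg, hgB⟩ := exists_mem_genericMatrixAlgebra_evalAt_eq hφ (diagonal d - B)
  -- at `t = 1` the line passes through `diagonal d`, for which `1` is a cyclic vector
  have hfin : {t : k | (krylovMatrix (B + t • (diagonal d - B)) 1).det = 0}.Finite := by
    refine finite_setOf_det_krylovMatrix_eq_zero _ _ _ (t₀ := 1) ?_
    rw [one_smul, add_sub_cancel, krylovMatrix_diagonal_one, det_vandermonde_ne_zero_iff]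
    exact hd
  have hmem := Polynomial.coeff_mem_of_eval_mem (scalarAgreement φ)
    ((pencil q g).charpoly.coeff s) hfin.infinite_compl ?_ 0
  · rw [Polynomial.coeff_zero_eq_eval_zero, eval_charpoly_coeff_pencil, zero_smul, add_zero]
      at hmem
    exact (mem_scalarAgreement_iff φ _).1 hmem
  intro t ht
  have hqt : q + t • g ∈ genericMatrixAlgebra k m n := add_mem hq (Subalgebra.smul_mem _ hg t)
  rw [eval_charpoly_coeff_pencil, algebraMap_smul]
  refine (mem_scalarAgreement_iff φ _).2
    (map_charpoly_coeff_smul_one_of_det_krylovMatrix_ne_zero hφ hqt ?_ s)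
  rwa [map_add, map_smul, hgB]

variable (k m n)

theorem stmt_13 [IsAlgClosed k]
    (φ : traceRing k m n →ₐ[k] Matrix (Fin n) (Fin n) k)
    (hφ : Function.Surjective φ) :
    ∀ p : traceRing k m n,
      φ p = evalAt k m n
        (fun i => φ ⟨genericMatrix k m n i,
          Algebra.subset_adjoin (Or.inl (Set.mem_range_self i))⟩)
        (p : Matrix (Fin n) (Fin n) (GenPolyRing k m n)) := by
  have : φ = (evalAt k m n (genericImages φ)).comp (traceRing k m n).val := by
    refine AlgHom.adjoin_ext ?_
    rintro _ (⟨i, rfl⟩ | ⟨q, hq, s, rfl⟩)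
    · exact (evalAt_genericMatrix (genericImages φ) i).symm
    · exact map_charpoly_coeff_smul_one hφ hq s
  exact fun p => congr($this p)

end
end

section
/- Let A be a k-subalgebra of M_n(K) such that A is a simple ring, every central element of A is a scalar matrix (so that F = {c ∈ K : c·I ∈ A} is a field, the center of A), and the dimension of A as an F-vector space is n². Then: (a) the K-linear span of A is all of M_n(K); and (b) for every k-subalgebra R with A ⊆ R ⊆ M_n(K), every central element of R is a scalar matrix, i.e., of the form c·I with c ∈ K. -/
/-!
If `c₁, …, cₘ ∈ K` are linearly independent over `F`, a relation `∑ cᵢ • aᵢ = 0` with `aᵢ ∈ A`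
must be trivial: the possible `i₀`-th entries of such relations form a two-sided ideal of the
simple ring `A`, so some relation has `i₀`-th entry `1`; commuting it with `z ∈ A` yields a
relation with fewer terms, so by induction its entries are central in `A`, hence lie in `F`,
contradicting the independence of the `cᵢ`. Consequently an `F`-basis of `A`, which has `n²`
elements, stays `K`-linearly independent and spans `M_n(K)`. An element commuting with `A`
then commutes with every matrix, so it is scalar.
-/

namespace Subring

variable {K B : Type*} [Field K] [Ring B] [Algebra K B] (A : Subring B) {ι : Type*}

def relationIdeal (s : Finset ι) (c : ι → K) (i₀ : ι) : TwoSidedIdeal A :=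
  TwoSidedIdeal.mk' {t | ∃ a : ι → B, (∀ i ∈ s, a i ∈ A) ∧ ∑ i ∈ s, c i • a i = 0 ∧ a i₀ = t}
    ⟨fun _ => 0, fun _ _ => A.zero_mem, by simp, rfl⟩
    (by
      rintro _ _ ⟨a, ha, hrel, hx⟩ ⟨b, hb, hrel', hy⟩
      refine ⟨a + b, fun i hi => A.add_mem (ha i hi) (hb i hi), ?_, by simp [hx, hy]⟩
      simp only [Pi.add_apply, smul_add, Finset.sum_add_distrib, hrel, hrel', add_zero])
    (by
      rintro _ ⟨a, ha, hrel, hx⟩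
      refine ⟨-a, fun i hi => A.neg_mem (ha i hi), ?_, by simp [hx]⟩
      simp only [Pi.neg_apply, smul_neg, Finset.sum_neg_distrib, hrel, neg_zero])
    (by
      rintro x _ ⟨a, ha, hrel, hy⟩
      refine ⟨fun i => x * a i, fun i hi => A.mul_mem x.2 (ha i hi), ?_, by simp [hy]⟩
      simp only [← mul_smul_comm, ← Finset.mul_sum, hrel, mul_zero])
    (by
      rintro _ y ⟨a, ha, hrel, hx⟩
      refine ⟨fun i => a i * y, fun i hi => A.mul_mem (ha i hi) y.2, ?_, by simp [hx]⟩
      simp only [← smul_mul_assoc, ← Finset.sum_mul, hrel, zero_mul])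

theorem mem_relationIdeal {s : Finset ι} {c : ι → K} {i₀ : ι} {t : A} :
    t ∈ A.relationIdeal s c i₀ ↔
      ∃ a : ι → B, (∀ i ∈ s, a i ∈ A) ∧ ∑ i ∈ s, c i • a i = 0 ∧ a i₀ = t :=
  TwoSidedIdeal.mem_mk' ..

theorem exists_relation_eq_one [IsSimpleRing A] {s : Finset ι} {c : ι → K} {a : ι → B}
    (ha : ∀ i ∈ s, a i ∈ A) (hrel : ∑ i ∈ s, c i • a i = 0) {i₀ : ι} (hi₀ : i₀ ∈ s)
    (hne : a i₀ ≠ 0) :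
    ∃ b : ι → B, (∀ i ∈ s, b i ∈ A) ∧ ∑ i ∈ s, c i • b i = 0 ∧ b i₀ = 1 := by
  have hmem : (⟨a i₀, ha i₀ hi₀⟩ : A) ∈ A.relationIdeal s c i₀ :=
    A.mem_relationIdeal.mpr ⟨a, ha, hrel, rfl⟩
  have htop : A.relationIdeal s c i₀ = ⊤ :=
    (IsSimpleOrder.eq_bot_or_eq_top _).resolve_left fun hbot => by
      rw [hbot, TwoSidedIdeal.mem_bot] at hmem
      exact hne (congrArg Subtype.val hmem)
  exact A.mem_relationIdeal.mp (htop ▸ TwoSidedIdeal.mem_top A (x := 1))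

theorem eq_zero_of_sum_smul_eq_zero [IsSimpleRing A] {F : Subfield K}
    (hcenter : ∀ z ∈ A, (∀ w ∈ A, z * w = w * z) → ∃ f ∈ F, z = f • (1 : B))
    {s : Finset ι} {c : ι → K} (hc : LinearIndepOn F c s) {a : ι → B}
    (ha : ∀ i ∈ s, a i ∈ A) (hrel : ∑ i ∈ s, c i • a i = 0) : ∀ i ∈ s, a i = 0 := by
  classical
  have hone : (1 : B) ≠ 0 := fun h => one_ne_zero (Subtype.ext h : (1 : A) = 0)
  induction s using Finset.strongInduction generalizing a with
  | H s IH =>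
  by_contra! ⟨i₀, hi₀, hne⟩
  obtain ⟨b, hb, hbrel, hb₀⟩ := A.exists_relation_eq_one ha hrel hi₀ hne
  -- the commutators with `z` form a relation vanishing at `i₀`, to which induction applies
  have hcomm : ∀ i ∈ s, ∀ z ∈ A, z * b i = b i * z := by
    intro i hi z hz
    set d := fun j => z * b j - b j * z
    have hd : ∀ j ∈ s, d j ∈ A := fun j hj =>
      A.sub_mem (A.mul_mem hz (hb j hj)) (A.mul_mem (hb j hj) hz)
    have hd₀ : d i₀ = 0 := by rw [sub_eq_zero, hb₀, mul_one, one_mul]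
    have hdrel : ∑ j ∈ s.erase i₀, c j • d j = 0 := by
      rw [Finset.sum_erase _ (by simp [hd₀])]
      have hsmul : ∀ j, c j • d j = z * (c j • b j) - c j • b j * z := fun j => by
        rw [smul_sub, mul_smul_comm, smul_mul_assoc]
      simp only [hsmul, Finset.sum_sub_distrib, ← Finset.mul_sum, ← Finset.sum_mul, hbrel,
        mul_zero, zero_mul, sub_zero]
    rcases eq_or_ne i i₀ with rfl | hi'
    · exact sub_eq_zero.mp hd₀
    · exact sub_eq_zero.mp (IH _ (Finset.erase_ssubset hi₀) (hc.mono (Finset.erase_subset ..))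
        (fun j hj => hd j (Finset.mem_of_mem_erase hj)) hdrel i (Finset.mem_erase.mpr ⟨hi', hi⟩))
  have hscalar : ∀ i, ∃ f : F, i ∈ s → b i = (f : K) • (1 : B) := by
    intro i
    by_cases hi : i ∈ s
    · obtain ⟨f, hf, h⟩ := hcenter _ (hb i hi) fun w hw => (hcomm i hi w hw).symm
      exact ⟨⟨f, hf⟩, fun _ => h⟩
    · exact ⟨0, fun h => absurd h hi⟩
  choose f hf using hscalar
  have hfrel : ∑ i ∈ s, f i • c i = 0 := by
    have : (∑ i ∈ s, f i • c i) • (1 : B) = 0 := by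
      rw [← hbrel, Finset.sum_smul]
      refine Finset.sum_congr rfl fun i hi => ?_
      rw [hf i hi, smul_smul, Subfield.smul_def, smul_eq_mul, mul_comm]
    exact (smul_eq_zero.mp this).resolve_right hone
  have hf₀ : f i₀ = 0 := linearIndepOn_finset_iff.mp hc f hfrel i₀ hi₀
  exact hone (by simpa [hf₀] using hb₀.symm.trans (hf i₀ hi₀))

theorem linearIndependent_of_linearIndependent_subfield [IsSimpleRing A] {F : Subfield K}
    (hcenter : ∀ z ∈ A, (∀ w ∈ A, z * w = w * z) → ∃ f ∈ F, z = f • (1 : B))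
    (hFA : ∀ f ∈ F, f • (1 : B) ∈ A) [Fintype ι] {v : ι → B} (hvA : ∀ i, v i ∈ A)
    (hv : LinearIndependent F v) : LinearIndependent K v := by
  rw [Fintype.linearIndependent_iff]
  intro g hg
  let W := Submodule.span F (Set.range g)
  have hgW : ∀ i, g i ∈ W := fun i => Submodule.subset_span (Set.mem_range_self i)
  have : Module.Finite F W := FiniteDimensional.span_of_finite F (Set.finite_range g)
  let e := Module.finBasis F W
  let h : ι → Fin (Module.finrank F W) → F := fun i t => e.repr ⟨g i, hgW i⟩ t
  have hg_eq : ∀ i, g i = ∑ t, (e t : K) * h i t := fun i => by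
    have := congrArg Subtype.val (e.sum_repr ⟨g i, hgW i⟩)
    simp only [AddSubmonoidClass.coe_finsetSum, SetLike.val_smul, Subfield.smul_def,
      smul_eq_mul] at this
    simp only [h, mul_comm (e _ : K)]
    exact this.symm
  have he : LinearIndepOn F (fun t => (e t : K))
      (Finset.univ : Finset (Fin (Module.finrank F W))) := by
    rw [Finset.coe_univ, linearIndepOn_univ_iff]
    exact e.linearIndependent.map' W.subtype W.ker_subtype
  have hrel : ∑ t ∈ Finset.univ, (e t : K) • ∑ i, h i t • v i = 0 := by
    calc ∑ t, (e t : K) • ∑ i, h i t • v i = ∑ i, (∑ t, (e t : K) * h i t) • v i := by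
          simp only [Finset.smul_sum, Subfield.smul_def, smul_smul, Finset.sum_smul]
          exact Finset.sum_comm
      _ = 0 := by simp only [← hg_eq, hg]
  have hmem : ∀ t ∈ Finset.univ, ∑ i, h i t • v i ∈ A := fun t _ =>
    A.sum_mem fun i _ => by
      rw [Subfield.smul_def, ← smul_one_mul]
      exact A.mul_mem (hFA _ (h i t).2) (hvA i)
  have hzero : ∀ i t, h i t = 0 := fun i t =>
    Fintype.linearIndependent_iff.mp hv (fun i => h i t)
      (A.eq_zero_of_sum_smul_eq_zero hcenter he hmem hrel t (Finset.mem_univ t)) i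
  intro i
  simp [hg_eq i, hzero]

theorem span_eq_top_of_finrank_span_subfield_eq [IsSimpleRing A] {F : Subfield K}
    (hcenter : ∀ z ∈ A, (∀ w ∈ A, z * w = w * z) → ∃ f ∈ F, z = f • (1 : B))
    (hFA : ∀ f ∈ F, f • (1 : B) ∈ A) [FiniteDimensional K B]
    (hdim : Module.finrank F (Submodule.span F (A : Set B)) = Module.finrank K B) :
    Submodule.span K (A : Set B) = ⊤ := by
  let N := Submodule.span F (A : Set B)
  have hNA : ∀ x ∈ N, x ∈ A := fun x hx => by
    induction hx using Submodule.span_induction with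
    | mem x hx => exact hx
    | zero => exact A.zero_mem
    | add x y _ _ hx hy => exact A.add_mem hx hy
    | smul f x _ hx =>
      rw [Subfield.smul_def, ← smul_one_mul]
      exact A.mul_mem (hFA f f.2) hx
  have : Nontrivial B := Subtype.val_injective.nontrivial (α := A)
  have : Module.Finite F N :=
    Module.finite_of_finrank_pos (hdim ▸ Module.finrank_pos)
  let e := Module.finBasis F N
  have hKind : LinearIndependent K (fun t => (e t : B)) :=
    A.linearIndependent_of_linearIndependent_subfield hcenter hFA (fun t => hNA _ (e t).2)
      (e.linearIndependent.map' N.subtype N.ker_subtype)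
  refine eq_top_mono (Submodule.span_mono ?_)
    (hKind.span_eq_top_of_card_eq_finrank' (by rw [Fintype.card_fin, hdim]))
  rintro _ ⟨t, rfl⟩
  exact hNA _ (e t).2

end Subring

theorem mem_center_of_span_eq_top {K B : Type*} [Field K] [Ring B] [Algebra K B] {S : Set B}
    (hS : Submodule.span K S = ⊤) {z : B} (hz : ∀ w ∈ S, z * w = w * z) : z ∈ Set.center B := by
  have hle : Submodule.span K S ≤ Subalgebra.toSubmodule (Subalgebra.centralizer K {z}) :=
    Submodule.span_le.mpr fun w hw => (Subalgebra.mem_centralizer_iff K).mpr fun g hg => by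
      rw [Set.mem_singleton_iff.mp hg]
      exact hz w hw
  rw [Semigroup.mem_center_iff]
  intro w
  exact ((Subalgebra.mem_centralizer_iff K).mp (hle (hS ▸ Submodule.mem_top)) z rfl).symm

open Matrix

theorem stmt_14_general (k K : Type*) [Field k] [Field K] [Algebra k K] (n : ℕ)
    (A : Subalgebra k (Matrix (Fin n) (Fin n) K))
    (hsimple : IsSimpleRing A)
    (hcentral : ∀ z ∈ A, (∀ w ∈ A, z * w = w * z) →
      ∃ c : K, z = c • (1 : Matrix (Fin n) (Fin n) K))
    (F : Subfield K)
    (hF : ∀ c : K, c ∈ F ↔ c • (1 : Matrix (Fin n) (Fin n) K) ∈ A)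
    (hdim : Module.finrank F
      (Submodule.span F (A : Set (Matrix (Fin n) (Fin n) K))) = n ^ 2) :
    Submodule.span K (A : Set (Matrix (Fin n) (Fin n) K)) = ⊤ ∧
    ∀ R : Subalgebra k (Matrix (Fin n) (Fin n) K), A ≤ R →
      ∀ z ∈ R, (∀ w ∈ R, z * w = w * z) →
        ∃ c : K, z = c • (1 : Matrix (Fin n) (Fin n) K) := by
  have : IsSimpleRing A.toSubring := hsimple
  have hcenter : ∀ z ∈ A, (∀ w ∈ A, z * w = w * z) → ∃ f ∈ F, z = f • 1 := fun z hz hzA => by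
    obtain ⟨c, rfl⟩ := hcentral z hz hzA
    exact ⟨c, (hF c).mpr hz, rfl⟩
  have hspan : Submodule.span K (A : Set (Matrix (Fin n) (Fin n) K)) = ⊤ :=
    A.toSubring.span_eq_top_of_finrank_span_subfield_eq hcenter (fun f hf => (hF f).mp hf)
      (hdim.trans (by
        rw [Module.finrank_matrix, Fintype.card_fin, Module.finrank_self, mul_one, sq]))
  refine ⟨hspan, fun R hAR z _ hzR => ?_⟩
  have hzcenter := mem_center_of_span_eq_top hspan fun w hw => hzR w (hAR hw)
  rw [Matrix.center_eq_range] at hzcenter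
  obtain ⟨c, rfl⟩ := hzcenter
  exact ⟨c, by rw [scalar_apply, smul_one_eq_diagonal]⟩

/-- let `A` be a `k`-subalgebra of `M_n(K)` which is a simple ring, whose
central elements are all scalar matrices (so that `F = {c ∈ K : c·I ∈ A}` is a field, the
center of `A`), and which has dimension `n²` as an `F`-vector space. Then (a) the
`K`-linear span of `A` is all of `M_n(K)`, and (b) for every `k`-subalgebra `R` with
`A ⊆ R ⊆ M_n(K)`, every central element of `R` is a scalar matrix `c·I` with `c ∈ K`. -/
theorem stmt_14 (k K : Type*) [Field k] [Field K] [Algebra k K] (n : ℕ) [NeZero n]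
    (A : Subalgebra k (Matrix (Fin n) (Fin n) K))
    (hsimple : IsSimpleRing A)
    (hcentral : ∀ z ∈ A, (∀ w ∈ A, z * w = w * z) →
      ∃ c : K, z = c • (1 : Matrix (Fin n) (Fin n) K))
    (F : Subfield K)
    (hF : ∀ c : K, c ∈ F ↔ c • (1 : Matrix (Fin n) (Fin n) K) ∈ A)
    (hdim : Module.finrank F
      (Submodule.span F (A : Set (Matrix (Fin n) (Fin n) K))) = n ^ 2) :
    Submodule.span K (A : Set (Matrix (Fin n) (Fin n) K)) = ⊤ ∧
    ∀ R : Subalgebra k (Matrix (Fin n) (Fin n) K), A ≤ R →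
      ∀ z ∈ R, (∀ w ∈ R, z * w = w * z) →
        ∃ c : K, z = c • (1 : Matrix (Fin n) (Fin n) K) :=
  stmt_14_general k K n A hsimple hcentral F hF hdim
end
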